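/- arXiv:2210.14693 — 3 statements merged into one kernel-verified Lean document; each statement's English description precedes it below -/
import Mathlib

section
/- For every natural number n and every real x > 0, the n-th derivative of x ↦ e^{-jx} x^n (with j a fixed nonnegative real) equals n! e^{-jx} L_n(jx), where L_n is the n-th Laguerre polynomial. -/
noncomputable def laguerre (n : ℕ) (x : ℝ) : ℝ :=
  Real.exp x / n.factorial * iteratedDeriv n (fun t : ℝ => Real.exp (-t) * t ^ n) x

/-!
By the Leibniz rule, the `n`-th derivative of `y ↦ exp (c * y) * y ^ n` at `x` is `exp (c * x)`
times a polynomial in the single variable `c * x`. Comparing `c = -j` at `x` with `c = -1` at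
`j * x` (the latter being the Rodrigues formula for `laguerre n (j * x)`) gives the theorem.
-/

open Finset Real

theorem iteratedDeriv_exp_const_mul_mul_pow (n : ℕ) (c x : ℝ) :
    iteratedDeriv n (fun y => exp (c * y) * y ^ n) x =
      exp (c * x) * ∑ i ∈ range (n + 1), n.choose i * n.descFactorial (n - i) * (c * x) ^ i := by
  have h_exp : ContDiff ℝ n fun y => exp (c * y) := by fun_prop
  have h_pow : ContDiff ℝ n fun y : ℝ => y ^ n := by fun_prop
  rw [iteratedDeriv_fun_mul h_exp.contDiffAt h_pow.contDiffAt, mul_sum]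
  refine sum_congr rfl fun i hi => ?_
  rw [iteratedDeriv_exp_const_mul, iteratedDeriv_pow,
    Nat.sub_sub_self (Nat.lt_succ_iff.mp (mem_range.mp hi))]
  ring

theorem iteratedDeriv_exp_mul_pow_general (n : ℕ) (j : ℝ) (x : ℝ) :
    iteratedDeriv n (fun y : ℝ => Real.exp (-j * y) * y ^ n) x =
      n.factorial * Real.exp (-j * x) * laguerre n (j * x) := by
  have h_exp_neg : (fun t : ℝ => exp (-t) * t ^ n) = fun t => exp (-1 * t) * t ^ n := by
    simp only [neg_one_mul]
  rw [laguerre, h_exp_neg, iteratedDeriv_exp_const_mul_mul_pow,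
    iteratedDeriv_exp_const_mul_mul_pow, neg_one_mul, neg_mul, exp_neg]
  field_simp

theorem iteratedDeriv_exp_mul_pow (n : ℕ) (j : ℝ) (hj : 0 ≤ j) (x : ℝ) (hx : 0 < x) :
    iteratedDeriv n (fun y : ℝ => Real.exp (-j * y) * y ^ n) x =
      n.factorial * Real.exp (-j * x) * laguerre n (j * x) :=
  iteratedDeriv_exp_mul_pow_general n j x
end

section
/- For every natural number n ≥ 1 and every x > 0, the n-th derivative of x^n/(1-e^{-x}) equals n! · Σ_{j=0}^∞ L_n(jx) e^{-jx}, where L_n is the n-th Laguerre polynomial. -/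
open Real Set

theorem Nat.descFactorial_le_factorial (n k : ℕ) : n.descFactorial k ≤ n.factorial := by
  rcases le_or_gt k n with h | h
  · rw [← Nat.factorial_mul_descFactorial h]
    exact Nat.le_mul_of_pos_left _ (Nat.factorial_pos _)
  · simp [Nat.descFactorial_eq_zero_iff_lt.mpr h]

theorem iteratedDeriv_pow_mul_exp (n k : ℕ) (c y : ℝ) :
    iteratedDeriv k (fun t => t ^ n * exp (c * t)) y =
      ∑ i ∈ Finset.range (k + 1),
        k.choose i * (n.descFactorial i * y ^ (n - i)) * (c ^ (k - i) * exp (c * y)) := by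
  rw [iteratedDeriv_fun_mul (f := (· ^ n)) (g := fun t => exp (c * t)) (by fun_prop) (by fun_prop)]
  simp only [iteratedDeriv_pow, iteratedDeriv_exp_const_mul]

theorem abs_iteratedDeriv_pow_mul_exp_le (n k : ℕ) (c y : ℝ) :
    |iteratedDeriv k (fun t => t ^ n * exp (c * t)) y| ≤
      n.factorial * (1 + |y|) ^ n * ((1 + |c|) ^ k * exp (c * y)) := by
  have hterm (i : ℕ) :
      (n.descFactorial i : ℝ) * |y| ^ (n - i) ≤ n.factorial * (1 + |y|) ^ n := by
    gcongr
    · exact_mod_cast Nat.descFactorial_le_factorial n i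
    · calc |y| ^ (n - i) ≤ (1 + |y|) ^ (n - i) := by gcongr; linarith
        _ ≤ (1 + |y|) ^ n := pow_le_pow_right₀ (by linarith [abs_nonneg y]) (Nat.sub_le n i)
  rw [iteratedDeriv_pow_mul_exp, add_pow 1 |c| k, Finset.sum_mul, Finset.mul_sum]
  refine (Finset.abs_sum_le_sum_abs _ _).trans (Finset.sum_le_sum fun i _ => ?_)
  simp only [abs_mul, abs_pow, Nat.abs_cast, abs_of_pos (exp_pos _), one_pow, one_mul]
  calc (k.choose i : ℝ) * (n.descFactorial i * |y| ^ (n - i)) * (|c| ^ (k - i) * exp (c * y))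
      ≤ k.choose i * (n.factorial * (1 + |y|) ^ n) * (|c| ^ (k - i) * exp (c * y)) := by
        gcongr _ * ?_ * _; exact hterm i
    _ = _ := by ring

theorem iteratedDeriv_pow_mul_exp_eq_of_mul_eq (n : ℕ) {c d y z : ℝ} (h : c * y = d * z) :
    iteratedDeriv n (fun t => t ^ n * exp (c * t)) y =
      iteratedDeriv n (fun t => t ^ n * exp (d * t)) z := by
  rw [iteratedDeriv_pow_mul_exp, iteratedDeriv_pow_mul_exp]
  refine Finset.sum_congr rfl fun i _ => ?_
  calc _ = n.choose i * n.descFactorial i * (c * y) ^ (n - i) * exp (c * y) := by ring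
    _ = _ := by rw [h]; ring

theorem summable_one_add_pow_mul_geometric_of_norm_lt_one {R : Type*} [NormedCommRing R]
    [HasSummableGeomSeries R] (k : ℕ) {r : R} (hr : ‖r‖ < 1) :
    Summable (fun j : ℕ => (1 + (j : R)) ^ k * r ^ j) := by
  simp_rw [add_pow, one_pow, one_mul, Finset.sum_mul]
  refine summable_sum fun i _ => ?_
  simpa only [mul_right_comm] using
    (summable_pow_mul_geometric_of_norm_lt_one (k - i) hr).mul_right ((k.choose i : ℕ) : R)

theorem iteratedDeriv_tsum_of_isOpen {ι 𝕜 F : Type*} [NontriviallyNormedField 𝕜]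
    [IsRCLikeNormedField 𝕜] [NormedAddCommGroup F] [NormedSpace 𝕜 F] [CompleteSpace F]
    {f : ι → 𝕜 → F} {s : Set 𝕜} (m : ℕ) (hs : IsOpen s) {x : 𝕜} (hx : x ∈ s)
    (hf : ∀ i, ContDiffOn 𝕜 (m + 1) (f i) s)
    (hsum : ∀ k ≤ m, SummableLocallyUniformlyOn (fun i => iteratedDeriv k (f i)) s) :
    iteratedDeriv m (fun z => ∑' i, f i z) x = ∑' i, iteratedDeriv m (f i) x := by
  have hwithin (g : 𝕜 → F) (k : ℕ) :
      EqOn (iteratedDerivWithin k g s) (iteratedDeriv k g) s :=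
    iteratedDerivWithin_of_isOpen hs
  rw [← hwithin _ m hx, tsum_congr fun i => (hwithin (f i) m hx).symm]
  refine iteratedDerivWithin_tsum m hs hx (fun t ht => ?_) (fun k _ hk => ?_)
    (fun i k r hk hr => ?_)
  · simpa using (hsum 0 (Nat.zero_le m)).summable ht
  · exact SummableLocallyUniformlyOn_congr (fun i t ht => (hwithin (f i) k ht).symm) (hsum k hk)
  · exact (((hf i).differentiableOn_iteratedDerivWithin (by exact_mod_cast Nat.lt_succ_of_le hk)
      hs.uniqueDiffOn) r hr).differentiableAt (hs.mem_nhds hr)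

theorem iteratedDeriv_pow_mul_exp_neg_mul (n : ℕ) (c x : ℝ) :
    iteratedDeriv n (fun y => y ^ n * exp (-c * y)) x =
      n.factorial * (laguerre n (c * x) * exp (-c * x)) := by
  have hfun : (fun t : ℝ => exp (-t) * t ^ n) = fun t => t ^ n * exp (-1 * t) := by
    funext t; rw [neg_one_mul, mul_comm]
  have hexp : exp (c * x) * exp (-(c * x)) = 1 := by rw [← exp_add, add_neg_cancel, exp_zero]
  rw [laguerre, hfun, iteratedDeriv_pow_mul_exp_eq_of_mul_eq n (show -c * x = -1 * (c * x) by ring)]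
  set D := iteratedDeriv n (fun t => t ^ n * exp (-1 * t)) (c * x)
  field_simp
  linear_combination -D * hexp

theorem summableLocallyUniformlyOn_iteratedDeriv_pow_mul_exp_neg (n k : ℕ) :
    SummableLocallyUniformlyOn
      (fun j : ℕ => iteratedDeriv k (fun y => y ^ n * exp (-(j : ℝ) * y))) (Ioi 0) := by
  refine SummableLocallyUniformlyOn_of_locally_bounded isOpen_Ioi fun K hKs hK => ?_
  obtain ⟨a, ha, haK⟩ := hK.exists_forall_le' continuousOn_id hKs
  obtain ⟨R, hR⟩ := hK.exists_bound_of_continuousOn continuousOn_id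
  have hr : ‖exp (-a)‖ < 1 := by
    rw [norm_of_nonneg (exp_nonneg _)]
    exact exp_lt_one_iff.mpr (by linarith)
  refine ⟨fun j => n.factorial * (1 + R) ^ n * ((1 + (j : ℝ)) ^ k * exp (-a) ^ j),
    (summable_one_add_pow_mul_geometric_of_norm_lt_one k hr).mul_left _, fun j y hy => ?_⟩
  have hyR : |y| ≤ R := hR y hy
  have hdecay : exp (-(j : ℝ) * y) ≤ exp (-a) ^ j := by
    rw [← exp_nat_mul, exp_le_exp]
    nlinarith [mul_le_mul_of_nonneg_left (show a ≤ y from haK y hy) (Nat.cast_nonneg' j)]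
  calc ‖iteratedDeriv k (fun y => y ^ n * exp (-(j : ℝ) * y)) y‖
      ≤ n.factorial * (1 + |y|) ^ n * ((1 + |-(j : ℝ)|) ^ k * exp (-(j : ℝ) * y)) :=
        abs_iteratedDeriv_pow_mul_exp_le n k _ y
    _ ≤ n.factorial * (1 + R) ^ n * ((1 + (j : ℝ)) ^ k * exp (-a) ^ j) := by
        rw [abs_neg, Nat.abs_cast]
        gcongr
        exact mul_nonneg (Nat.cast_nonneg _) (pow_nonneg (by linarith [abs_nonneg y]) n)

theorem iteratedDeriv_tsum_pow_mul_exp_neg (m n : ℕ) {x : ℝ} (hx : 0 < x) :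
    iteratedDeriv m (fun y => ∑' j : ℕ, y ^ n * exp (-(j : ℝ) * y)) x =
      ∑' j : ℕ, iteratedDeriv m (fun y => y ^ n * exp (-(j : ℝ) * y)) x :=
  iteratedDeriv_tsum_of_isOpen m isOpen_Ioi hx (fun _ => by fun_prop)
    fun k _ => summableLocallyUniformlyOn_iteratedDeriv_pow_mul_exp_neg n k

theorem pow_div_one_sub_exp_neg_eq_tsum (n : ℕ) {y : ℝ} (hy : 0 < y) :
    y ^ n / (1 - exp (-y)) = ∑' j : ℕ, y ^ n * exp (-(j : ℝ) * y) := by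
  have hgeom : ∑' j : ℕ, exp (-y) ^ j = (1 - exp (-y))⁻¹ :=
    tsum_geometric_of_lt_one (exp_nonneg _) (exp_lt_one_iff.mpr (by linarith))
  simp_rw [div_eq_mul_inv, ← hgeom, ← tsum_mul_left, ← exp_nat_mul, neg_mul, mul_neg]

theorem deriv_eq_laguerre_series_general (n : ℕ) (x : ℝ) (hx : 0 < x) :
    iteratedDeriv n (fun y : ℝ => y ^ n / (1 - Real.exp (-y))) x =
      n.factorial * ∑' j : ℕ, laguerre n ((j : ℝ) * x) * Real.exp (-(j : ℝ) * x) := by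
  have hseries : EqOn (fun y : ℝ => y ^ n / (1 - exp (-y)))
      (fun y => ∑' j : ℕ, y ^ n * exp (-(j : ℝ) * y)) (Ioi 0) :=
    fun y hy => pow_div_one_sub_exp_neg_eq_tsum n hy
  rw [hseries.iteratedDeriv_of_isOpen isOpen_Ioi n hx, iteratedDeriv_tsum_pow_mul_exp_neg n n hx,
    ← tsum_mul_left]
  exact tsum_congr fun j => iteratedDeriv_pow_mul_exp_neg_mul n j x

theorem deriv_eq_laguerre_series (n : ℕ) (hn : 1 ≤ n) (x : ℝ) (hx : 0 < x) :
    iteratedDeriv n (fun y : ℝ => y ^ n / (1 - Real.exp (-y))) x =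
      n.factorial * ∑' j : ℕ, laguerre n ((j : ℝ) * x) * Real.exp (-(j : ℝ) * x) :=
  deriv_eq_laguerre_series_general n x hx
end

section
/- For every natural number n, ∫_{-∞}^∞ e^{-t²} H_n(t)² dt = √π · 2^n · n!, where H_n is the n-th physicists' Hermite polynomial. -/
/-!
Rodrigues' formula identifies `H_n` with the polynomials generated from `1` by the raising
operator `Q ↦ 2XQ - Q'`, which is adjoint to differentiation for the weight `e^{-t²}`. Since
`H_{n+1}' = 2(n+1) H_n`, integrating by parts once gives
`∫ e^{-t²} H_{n+1}² = 2(n+1) ∫ e^{-t²} H_n²`, and the Gaussian integral `∫ e^{-t²} = √π` starts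
the induction.
-/

noncomputable def physHermite (n : ℕ) (t : ℝ) : ℝ :=
  (-1 : ℝ) ^ n * Real.exp (t ^ 2) * iteratedDeriv n (fun s : ℝ => Real.exp (-s ^ 2)) t

open Polynomial MeasureTheory Real

noncomputable def gaussianRaise (Q : ℝ[X]) : ℝ[X] :=
  C 2 * X * Q - derivative Q

noncomputable def physHermitePoly : ℕ → ℝ[X]
  | 0 => 1
  | n + 1 => gaussianRaise (physHermitePoly n)

lemma hasDerivAt_eval_mul_gaussian (Q : ℝ[X]) (t : ℝ) :
    HasDerivAt (fun s => Q.eval s * exp (-s ^ 2))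
      (-((gaussianRaise Q).eval t * exp (-t ^ 2))) t := by
  have hexp : HasDerivAt (fun s : ℝ => exp (-s ^ 2)) (exp (-t ^ 2) * -(2 * t)) t := by
    simpa using ((hasDerivAt_pow 2 t).fun_neg).exp
  refine ((Q.hasDerivAt t).fun_mul hexp).congr_deriv ?_
  simp only [gaussianRaise, eval_sub, eval_mul, eval_C, eval_X]
  ring

lemma iteratedDeriv_gaussian (n : ℕ) :
    iteratedDeriv n (fun s : ℝ => exp (-s ^ 2)) =
      fun t => (-1 : ℝ) ^ n * ((physHermitePoly n).eval t * exp (-t ^ 2)) := by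
  induction n with
  | zero => funext t; simp [physHermitePoly]
  | succ n ih =>
    funext t
    have hder := hasDerivAt_eval_mul_gaussian (physHermitePoly n) t
    rw [iteratedDeriv_succ, ih, deriv_const_mul _ hder.differentiableAt, hder.deriv,
      physHermitePoly, pow_succ]
    ring

lemma physHermite_eq_eval (n : ℕ) (t : ℝ) : physHermite n t = (physHermitePoly n).eval t := by
  have hexp : exp (t ^ 2) * exp (-t ^ 2) = 1 := by rw [← exp_add, add_neg_cancel, exp_zero]
  have hsign : (-1 : ℝ) ^ n * (-1) ^ n = 1 := by rw [← mul_pow, neg_one_mul, neg_neg, one_pow]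
  rw [physHermite, iteratedDeriv_gaussian]
  calc (-1 : ℝ) ^ n * exp (t ^ 2) * ((-1) ^ n * ((physHermitePoly n).eval t * exp (-t ^ 2)))
      = ((-1) ^ n * (-1) ^ n) * (exp (t ^ 2) * exp (-t ^ 2)) * (physHermitePoly n).eval t := by
        ring
    _ = (physHermitePoly n).eval t := by rw [hsign, hexp, one_mul, one_mul]

lemma derivative_gaussianRaise (Q : ℝ[X]) :
    derivative (gaussianRaise Q) = gaussianRaise (derivative Q) + C 2 * Q := by
  simp only [gaussianRaise, derivative_sub, derivative_mul, derivative_C, derivative_X]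
  ring

lemma gaussianRaise_C_mul (a : ℝ) (Q : ℝ[X]) :
    gaussianRaise (C a * Q) = C a * gaussianRaise Q := by
  simp only [gaussianRaise, derivative_mul, derivative_C]
  ring

lemma derivative_physHermitePoly_succ (n : ℕ) :
    derivative (physHermitePoly (n + 1)) = C (2 * (n + 1) : ℝ) * physHermitePoly n := by
  induction n with
  | zero => simp [physHermitePoly, gaussianRaise]
  | succ n ih =>
    rw [physHermitePoly, derivative_gaussianRaise, ih, gaussianRaise_C_mul, ← physHermitePoly,
      ← add_mul, ← C_add]
    congr 2
    push_cast
    ring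

lemma integrable_eval_mul_gaussian (P : ℝ[X]) :
    Integrable fun t : ℝ => P.eval t * exp (-t ^ 2) := by
  induction P using Polynomial.induction_on' with
  | add p q hp hq => simpa only [eval_add, add_mul, Pi.add_def] using hp.add hq
  | monomial n a =>
    have hmono : Integrable fun t : ℝ => t ^ (n : ℝ) * exp (-1 * t ^ 2) :=
      integrable_rpow_mul_exp_neg_mul_sq one_pos (neg_one_lt_zero.trans_le n.cast_nonneg)
    convert hmono.const_mul a using 2 with t
    simp only [eval_monomial, rpow_natCast, neg_one_mul]
    ring

lemma integrable_eval_mul_eval_mul_gaussian (P Q : ℝ[X]) :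
    Integrable fun t : ℝ => P.eval t * (Q.eval t * exp (-t ^ 2)) := by
  simpa only [eval_mul, mul_assoc] using integrable_eval_mul_gaussian (P * Q)

lemma integral_derivative_mul_gaussian (P Q : ℝ[X]) :
    ∫ t, (derivative P).eval t * (Q.eval t * exp (-t ^ 2)) =
      ∫ t, P.eval t * ((gaussianRaise Q).eval t * exp (-t ^ 2)) := by
  have hparts := integral_mul_deriv_eq_deriv_mul_of_integrable
    (fun t _ => P.hasDerivAt t) (fun t _ => hasDerivAt_eval_mul_gaussian Q t)
    ((integrable_eval_mul_eval_mul_gaussian P (gaussianRaise Q)).neg.congr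
      (.of_forall fun t => by simp only [Pi.neg_apply, Pi.mul_apply, mul_neg]))
    (integrable_eval_mul_eval_mul_gaussian (derivative P) Q)
    (integrable_eval_mul_eval_mul_gaussian P Q)
  simp only [mul_neg, integral_neg, neg_inj] at hparts
  exact hparts.symm

lemma integral_physHermitePoly_sq_succ (n : ℕ) :
    ∫ t, exp (-t ^ 2) * (physHermitePoly (n + 1)).eval t ^ 2 =
      2 * (n + 1) * ∫ t, exp (-t ^ 2) * (physHermitePoly n).eval t ^ 2 := by
  calc ∫ t, exp (-t ^ 2) * (physHermitePoly (n + 1)).eval t ^ 2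
      = ∫ t, (physHermitePoly (n + 1)).eval t *
          ((gaussianRaise (physHermitePoly n)).eval t * exp (-t ^ 2)) := by
        simp only [physHermitePoly]
        congr 1 with t
        ring
    _ = ∫ t, (derivative (physHermitePoly (n + 1))).eval t *
          ((physHermitePoly n).eval t * exp (-t ^ 2)) :=
        (integral_derivative_mul_gaussian _ _).symm
    _ = ∫ t, 2 * (n + 1) * (exp (-t ^ 2) * (physHermitePoly n).eval t ^ 2) := by
        simp only [derivative_physHermitePoly_succ, eval_mul, eval_C]
        congr 1 with t
        ring
    _ = 2 * (n + 1) * ∫ t, exp (-t ^ 2) * (physHermitePoly n).eval t ^ 2 :=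
        integral_const_mul _ _

theorem hermite_norm_sq (n : ℕ) :
    ∫ t : ℝ, Real.exp (-t ^ 2) * (physHermite n t) ^ 2 =
      Real.sqrt Real.pi * 2 ^ n * n.factorial := by
  simp only [physHermite_eq_eval]
  induction n with
  | zero => simpa [physHermitePoly] using integral_gaussian 1
  | succ n ih =>
    rw [integral_physHermitePoly_sq_succ, ih, Nat.factorial_succ]
    push_cast
    ring
end
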